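/- arXiv:2309.10163 — 2 statements merged into one kernel-verified Lean document; each statement's English description precedes it below -/
import Mathlib

section
/- Fix a nonnegative integer k. Let Q_k ⊂ ℝ^k be the polytope of points (d_1, …, d_k) such that, setting d_0 = 1, one has -1 ≤ d_i - d_{i-1} ≤ 1 and d_{i-1} + d_i ≥ 1 for all i = 1, …, k. Let H_k ⊂ ℝ^k be the central slab of the hypercube, that is, the set of (z_1, …, z_k) with -1 ≤ z_i ≤ 1 for all i and -1 ≤ z_1 + ⋯ + z_k ≤ 1. Then the k-dimensional Lebesgue volumes of Q_k and H_k are equal: Vol(Q_k) = Vol(H_k). -/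
open MeasureTheory Real

/-- Extend a point `(d_1, …, d_k) ∈ ℝ^k` to the sequence `d_0, d_1, …, d_k` with `d_0 = 1`
(values beyond index `k` are junk). -/
def dext (k : ℕ) (d : Fin k → ℝ) : ℕ → ℝ
  | 0 => 1
  | m + 1 => if h : m < k then d ⟨m, h⟩ else 0

/-- The polytope `Q_k` of points `(d_1, …, d_k)` such that, with `d_0 = 1`,
`-1 ≤ d_i - d_{i-1} ≤ 1` and `d_{i-1} + d_i ≥ 1` for all `i = 1, …, k`. -/
def Qset (k : ℕ) : Set (Fin k → ℝ) :=
  {d | ∀ i : Fin k, |dext k d ((i : ℕ) + 1) - dext k d (i : ℕ)| ≤ 1 ∧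
        1 ≤ dext k d (i : ℕ) + dext k d ((i : ℕ) + 1)}

/-- The central slab `H_k = {z ∈ [-1,1]^k : -1 ≤ z_1 + ⋯ + z_k ≤ 1}` of the hypercube. -/
def Hset (k : ℕ) : Set (Fin k → ℝ) :=
  {z | (∀ i : Fin k, z i ∈ Set.Icc (-1 : ℝ) 1) ∧ |∑ i : Fin k, z i| ≤ 1}

/-!
Write `h_k(x)` for the volume of `Q_k` with `d_0 = x` instead of `1`, and `g_k(x)` for that of
the slab `{z ∈ [-1,1]^k : |x + z_1 + ⋯ + z_k| ≤ 1}`. Slicing off the first coordinate gives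
`h_{k+1}(x) = ∫_{|x-1|}^{x+1} h_k` for `x ≥ 0` and `g_{k+1}(x) = ∫_{x-1}^{x+1} g_k`.
By induction these recursions yield `h_{k+1}(x) = ∫_{-x}^{x} g_k` for `x ≥ 0`: for any locally
integrable `g`, the function `K(u) = ∫_{-u}^{u} g` is odd, and both `∫_{|x-1|}^{x+1} K` and
`∫_{-x}^{x} ∫_{v-1}^{v+1} g` equal `∫_{1-x}^{1+x} K`. At `x = 1` this reads
`h_{k+1}(1) = ∫_{-1}^{1} g_k = g_{k+1}(0)`.
-/

open Set intervalIntegral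

def armSeq (k : ℕ) (x : ℝ) (d : Fin k → ℝ) : ℕ → ℝ
  | 0 => x
  | m + 1 => if h : m < k then d ⟨m, h⟩ else 0

def armPolytope (k : ℕ) (x : ℝ) : Set (Fin k → ℝ) :=
  {d | ∀ i : Fin k, |armSeq k x d ((i : ℕ) + 1) - armSeq k x d (i : ℕ)| ≤ 1 ∧
        1 ≤ armSeq k x d (i : ℕ) + armSeq k x d ((i : ℕ) + 1)}

def shiftedSlab (k : ℕ) (x : ℝ) : Set (Fin k → ℝ) :=
  {z | (∀ i : Fin k, z i ∈ Icc (-1 : ℝ) 1) ∧ |x + ∑ i : Fin k, z i| ≤ 1}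

theorem Qset_eq_armPolytope (k : ℕ) : Qset k = armPolytope k 1 := by
  have : dext k = armSeq k 1 := by funext d m; cases m <;> rfl
  simp only [Qset, armPolytope, this]

theorem Hset_eq_shiftedSlab (k : ℕ) : Hset k = shiftedSlab k 0 := by
  simp only [Hset, shiftedSlab, zero_add]

@[simp]
theorem armSeq_zero (k : ℕ) (x : ℝ) (d : Fin k → ℝ) : armSeq k x d 0 = x := rfl

@[simp]
theorem armSeq_cons_succ (k : ℕ) (x u : ℝ) (r : Fin k → ℝ) (m : ℕ) :
    armSeq (k + 1) x (Fin.cons u r) (m + 1) = armSeq k u r m := by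
  cases m with
  | zero => simp [armSeq]
  | succ m =>
    by_cases h : m < k
    · rw [armSeq, armSeq, dif_pos h, dif_pos (by omega)]
      exact Fin.cons_succ (α := fun _ => ℝ) u r ⟨m, h⟩
    · rw [armSeq, armSeq, dif_neg h, dif_neg (by omega)]

theorem abs_sub_le_one_and_one_le_add_iff {x u : ℝ} :
    |u - x| ≤ 1 ∧ 1 ≤ x + u ↔ u ∈ Icc |x - 1| (x + 1) := by
  rw [abs_le, mem_Icc, abs_le']
  constructor <;> rintro ⟨⟨h₁, h₂⟩, h₃⟩ <;> exact ⟨⟨by linarith, by linarith⟩, by linarith⟩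

theorem cons_mem_armPolytope {k : ℕ} {x u : ℝ} {r : Fin k → ℝ} :
    Fin.cons u r ∈ armPolytope (k + 1) x ↔ u ∈ Icc |x - 1| (x + 1) ∧ r ∈ armPolytope k u := by
  simp only [armPolytope, mem_ofPred_eq, Fin.forall_fin_succ, Fin.val_zero, Fin.val_succ,
    armSeq_cons_succ, armSeq_zero, abs_sub_le_one_and_one_le_add_iff]

theorem cons_mem_shiftedSlab {k : ℕ} {x u : ℝ} {r : Fin k → ℝ} :
    Fin.cons u r ∈ shiftedSlab (k + 1) x ↔ u ∈ Icc (-1) 1 ∧ r ∈ shiftedSlab k (x + u) := by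
  simp only [shiftedSlab, mem_ofPred_eq, Fin.forall_fin_succ, Fin.cons_zero, Fin.cons_succ,
    Fin.sum_cons, add_assoc, and_assoc]

theorem measurable_armSeq (k m : ℕ) :
    Measurable fun p : ℝ × (Fin k → ℝ) => armSeq k p.1 p.2 m := by
  cases m with
  | zero => exact measurable_fst
  | succ m =>
    by_cases h : m < k
    · simp only [armSeq, dif_pos h]; fun_prop
    · simp [armSeq, h]

theorem measurableSet_setOf_mem_armPolytope (k : ℕ) :
    MeasurableSet {p : ℝ × (Fin k → ℝ) | p.2 ∈ armPolytope k p.1} := by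
  simp only [armPolytope, mem_ofPred_eq]
  simp only [ofPred_forall, ofPred_and]
  have hseq := measurable_armSeq k
  exact MeasurableSet.iInter fun i =>
    (measurableSet_le ((hseq _).sub (hseq _)).abs measurable_const).inter
      (measurableSet_le measurable_const ((hseq _).add (hseq _)))

theorem measurableSet_setOf_mem_shiftedSlab (k : ℕ) :
    MeasurableSet {p : ℝ × (Fin k → ℝ) | p.2 ∈ shiftedSlab k p.1} := by
  simp only [shiftedSlab, mem_ofPred_eq]
  simp only [ofPred_forall, ofPred_and]
  refine (MeasurableSet.iInter fun i => measurableSet_Icc.preimage ?_).inter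
    (measurableSet_le ?_ measurable_const) <;> fun_prop

theorem measurableSet_armPolytope (k : ℕ) (x : ℝ) : MeasurableSet (armPolytope k x) :=
  (measurableSet_setOf_mem_armPolytope k).preimage measurable_prodMk_left

theorem measurableSet_shiftedSlab (k : ℕ) (x : ℝ) : MeasurableSet (shiftedSlab k x) :=
  (measurableSet_setOf_mem_shiftedSlab k).preimage measurable_prodMk_left

theorem measurable_volume_armPolytope (k : ℕ) : Measurable fun x => volume (armPolytope k x) :=
  measurable_measure_prodMk_left (measurableSet_setOf_mem_armPolytope k)

theorem measurable_volume_shiftedSlab (k : ℕ) : Measurable fun x => volume (shiftedSlab k x) :=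
  measurable_measure_prodMk_left (measurableSet_setOf_mem_shiftedSlab k)

theorem measure_pi_eq_setLIntegral_of_cons_mem_iff {α : Type*} [MeasurableSpace α]
    (μ : Measure α) [SigmaFinite μ] {k : ℕ} {S : Set (Fin (k + 1) → α)} (hS : MeasurableSet S)
    {I : Set α} (hI : MeasurableSet I) {T : α → Set (Fin k → α)}
    (hST : ∀ u r, Fin.cons u r ∈ S ↔ u ∈ I ∧ r ∈ T u) :
    Measure.pi (fun _ => μ) S = ∫⁻ u in I, Measure.pi (fun _ => μ) (T u) ∂μ := by
  set e := MeasurableEquiv.piFinSuccAbove (fun _ : Fin (k + 1) => α) 0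
  have he : ∀ p, e.symm p = Fin.cons p.1 p.2 := fun p => by
    simp [e, MeasurableEquiv.piFinSuccAbove_symm_apply, Fin.insertNthEquiv, Fin.insertNth_zero']
  have hslice : ∀ u, Measure.pi (fun _ => μ) (Prod.mk u ⁻¹' (e.symm ⁻¹' S)) =
      I.indicator (fun u => Measure.pi (fun _ => μ) (T u)) u := fun u => by
    by_cases hu : u ∈ I <;> simp [preimage, he, hST, hu]
  rw [← (measurePreserving_piFinSuccAbove (fun _ : Fin (k + 1) => μ) 0).symm.measure_preimage
    hS.nullMeasurableSet, Measure.prod_apply (e.symm.measurable hS)]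
  simp_rw [hslice, lintegral_indicator hI]

theorem volume_armPolytope_succ (k : ℕ) (x : ℝ) :
    volume (armPolytope (k + 1) x) = ∫⁻ u in Icc |x - 1| (x + 1), volume (armPolytope k u) :=
  measure_pi_eq_setLIntegral_of_cons_mem_iff volume (measurableSet_armPolytope _ _)
    measurableSet_Icc fun _ _ => cons_mem_armPolytope

theorem volume_shiftedSlab_succ (k : ℕ) (x : ℝ) :
    volume (shiftedSlab (k + 1) x) = ∫⁻ u in Icc (-1) 1, volume (shiftedSlab k (x + u)) :=
  measure_pi_eq_setLIntegral_of_cons_mem_iff volume (measurableSet_shiftedSlab _ _)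
    measurableSet_Icc fun _ _ => cons_mem_shiftedSlab

theorem armPolytope_zero (x : ℝ) : armPolytope 0 x = univ :=
  eq_univ_of_forall fun _ i => i.elim0

theorem shiftedSlab_zero (x : ℝ) : shiftedSlab 0 x = {_z | x ∈ Icc (-1) 1} := by
  simp [shiftedSlab, abs_le]

theorem volume_armPolytope_le (k : ℕ) (x : ℝ) : volume (armPolytope k x) ≤ 2 ^ k := by
  induction k generalizing x with
  | zero => simp [armPolytope_zero, volume_pi]
  | succ k ih =>
    calc volume (armPolytope (k + 1) x)
        ≤ ∫⁻ _ in Icc |x - 1| (x + 1), 2 ^ k := by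
          rw [volume_armPolytope_succ]; exact lintegral_mono fun u => ih u
      _ = 2 ^ k * ENNReal.ofReal (x + 1 - |x - 1|) := by
          rw [setLIntegral_const, Real.volume_Icc]
      _ ≤ 2 ^ k * 2 := by
          gcongr
          rw [ENNReal.ofReal_le_iff_le_toReal (by simp)]
          norm_num
          linarith [le_abs_self (x - 1)]
      _ = 2 ^ (k + 1) := (pow_succ _ _).symm

theorem volume_shiftedSlab_le (k : ℕ) (x : ℝ) : volume (shiftedSlab k x) ≤ 2 ^ k :=
  calc volume (shiftedSlab k x) ≤ volume (univ.pi fun _ : Fin k => Icc (-1 : ℝ) 1) :=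
        measure_mono fun z hz i _ => hz.1 i
    _ = 2 ^ k := by norm_num [Real.volume_Icc_pi]

theorem volume_armPolytope_ne_top (k : ℕ) (x : ℝ) : volume (armPolytope k x) ≠ ⊤ :=
  ne_top_of_le_ne_top (by simp) (volume_armPolytope_le k x)

theorem volume_shiftedSlab_ne_top (k : ℕ) (x : ℝ) : volume (shiftedSlab k x) ≠ ⊤ :=
  ne_top_of_le_ne_top (by simp) (volume_shiftedSlab_le k x)

theorem measureReal_armPolytope_zero (x : ℝ) : volume.real (armPolytope 0 x) = 1 := by
  simp [armPolytope_zero, measureReal_def, volume_pi]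

theorem measureReal_shiftedSlab_zero (x : ℝ) :
    volume.real (shiftedSlab 0 x) = (Icc (-1) 1).indicator 1 x := by
  by_cases hx : x ∈ Icc (-1) 1 <;> simp [shiftedSlab_zero, hx, measureReal_def, volume_pi]

theorem measureReal_armPolytope_succ (k : ℕ) {x : ℝ} (hx : 0 ≤ x) :
    volume.real (armPolytope (k + 1) x) =
      ∫ u in |x - 1|..x + 1, volume.real (armPolytope k u) := by
  rw [measureReal_def, volume_armPolytope_succ, ← integral_toReal
      (measurable_volume_armPolytope k).aemeasurable
      (ae_of_all _ fun u => (volume_armPolytope_ne_top k u).lt_top),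
    integral_Icc_eq_integral_Ioc, integral_of_le (abs_le.mpr ⟨by linarith, by linarith⟩)]
  rfl

theorem measureReal_shiftedSlab_succ (k : ℕ) (x : ℝ) :
    volume.real (shiftedSlab (k + 1) x) =
      ∫ u in x - 1..x + 1, volume.real (shiftedSlab k u) := by
  rw [measureReal_def, volume_shiftedSlab_succ,
    ← integral_toReal (f := fun u => volume (shiftedSlab k (x + u)))
      ((measurable_volume_shiftedSlab k).comp (measurable_const_add x)).aemeasurable
      (ae_of_all _ fun u => (volume_shiftedSlab_ne_top k _).lt_top),
    integral_Icc_eq_integral_Ioc, ← integral_of_le (by norm_num), sub_eq_add_neg,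
    ← integral_comp_add_left]
  rfl

theorem intervalIntegrable_measureReal_shiftedSlab (k : ℕ) (a b : ℝ) :
    IntervalIntegrable (fun x => volume.real (shiftedSlab k x)) volume a b :=
  (intervalIntegrable_const (c := (2 : ℝ) ^ k)).mono_fun'
    (measurable_volume_shiftedSlab k).ennreal_toReal.aestronglyMeasurable
    (ae_of_all _ fun x => by
      simpa [measureReal_def] using ENNReal.toReal_mono (by simp) (volume_shiftedSlab_le k x))

theorem integral_self_neg_eq_zero_of_odd {f : ℝ → ℝ} (hf : ∀ x, f (-x) = -f x) (a : ℝ) :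
    ∫ x in a..-a, f x = 0 := by
  have h : ∫ x in a..-a, f x = -∫ x in a..-a, f x :=
    calc ∫ x in a..-a, f x = ∫ x in a..-a, f (-x) := by rw [integral_comp_neg, neg_neg]
      _ = -∫ x in a..-a, f x := by simp_rw [hf, intervalIntegral.integral_neg]
  linarith

theorem integral_abs_sub_one_integral_neg_eq {g : ℝ → ℝ}
    (hg : ∀ a b, IntervalIntegrable g volume a b) (x : ℝ) :
    ∫ u in |x - 1|..x + 1, ∫ t in -u..u, g t = ∫ v in -x..x, ∫ t in v - 1..v + 1, g t := by
  set G : ℝ → ℝ := fun u => ∫ t in 0..u, g t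
  have hG : Continuous G := continuous_primitive hg 0
  have hsub : ∀ a b, ∫ t in a..b, g t = G b - G a := fun a b =>
    (integral_interval_sub_left (hg 0 b) (hg 0 a)).symm
  set K : ℝ → ℝ := fun u => G u - G (-u)
  have hK : Continuous K := by fun_prop
  have hK_odd : ∀ u, K (-u) = -K u := fun u => by simp only [K, neg_neg, neg_sub]
  have hrhs : ∫ v in -x..x, ∫ t in v - 1..v + 1, g t = ∫ u in 1 - x..1 + x, K u := by
    have hshift : ∫ v in -x..x, G (v + 1) = ∫ u in 1 - x..1 + x, G u := by
      rw [integral_comp_add_right]; ring_nf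
    have hreflect : ∫ v in -x..x, G (v - 1) = ∫ u in 1 - x..1 + x, G (-u) := by
      simp_rw [← neg_sub (1 : ℝ)]
      rw [integral_comp_sub_left (fun u => G (-u))]; ring_nf
    simp_rw [hsub]
    rw [integral_sub ((by fun_prop : Continuous fun v => G (v + 1)).intervalIntegrable _ _)
        ((by fun_prop : Continuous fun v => G (v - 1)).intervalIntegrable _ _), hshift, hreflect,
      ← integral_sub (hG.intervalIntegrable _ _)
        ((by fun_prop : Continuous fun u => G (-u)).intervalIntegrable _ _)]
  have hsplit : ∫ u in 1 - x..|x - 1|, K u = 0 := by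
    rcases abs_choice (x - 1) with h | h
    · rw [h, show x - 1 = -(1 - x) by ring, integral_self_neg_eq_zero_of_odd hK_odd]
    · rw [h, neg_sub, integral_same]
  calc ∫ u in |x - 1|..x + 1, ∫ t in -u..u, g t = ∫ u in |x - 1|..1 + x, K u := by
        simp_rw [hsub, add_comm x 1]; rfl
    _ = (∫ u in 1 - x..|x - 1|, K u) + ∫ u in |x - 1|..1 + x, K u := by rw [hsplit, zero_add]
    _ = ∫ u in 1 - x..1 + x, K u :=
        integral_add_adjacent_intervals (hK.intervalIntegrable _ _) (hK.intervalIntegrable _ _)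
    _ = ∫ v in -x..x, ∫ t in v - 1..v + 1, g t := hrhs.symm

theorem integral_indicator_Icc_neg_one_one {x : ℝ} (hx : 0 ≤ x) :
    ∫ t in -x..x, (Icc (-1 : ℝ) 1).indicator 1 t = x + 1 - |x - 1| := by
  rw [integral_of_le (by linarith), setIntegral_indicator measurableSet_Icc, Pi.one_def,
    setIntegral_const, smul_eq_mul, mul_one]
  rcases le_or_gt x 1 with h | h
  · rw [inter_eq_left.mpr (Ioc_subset_Icc_self.trans (Icc_subset_Icc (by linarith) h)),
      Real.volume_real_Ioc_of_le (by linarith), abs_of_nonpos (by linarith)]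
    ring
  · rw [inter_eq_right.mpr (Icc_subset_Ioc_iff (by norm_num) |>.mpr ⟨by linarith, by linarith⟩),
      Real.volume_real_Icc_of_le (by norm_num), abs_of_pos (by linarith)]
    ring

theorem measureReal_armPolytope_succ_eq_integral (k : ℕ) {x : ℝ} (hx : 0 ≤ x) :
    volume.real (armPolytope (k + 1) x) = ∫ t in -x..x, volume.real (shiftedSlab k t) := by
  induction k generalizing x with
  | zero =>
    simp_rw [measureReal_armPolytope_succ 0 hx, measureReal_armPolytope_zero,
      measureReal_shiftedSlab_zero, integral_indicator_Icc_neg_one_one hx,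
      intervalIntegral.integral_const, smul_eq_mul, mul_one]
  | succ k ih =>
    calc volume.real (armPolytope (k + 2) x)
        = ∫ u in |x - 1|..x + 1, ∫ t in -u..u, volume.real (shiftedSlab k t) := by
          rw [measureReal_armPolytope_succ _ hx]
          exact integral_congr fun u hu => ih ((le_min (abs_nonneg _) (by linarith)).trans hu.1)
      _ = ∫ v in -x..x, ∫ t in v - 1..v + 1, volume.real (shiftedSlab k t) :=
          integral_abs_sub_one_integral_neg_eq (intervalIntegrable_measureReal_shiftedSlab k) x
      _ = ∫ v in -x..x, volume.real (shiftedSlab (k + 1) v) := by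
          simp_rw [measureReal_shiftedSlab_succ]

/-- The `k`-dimensional Lebesgue volumes of `Q_k` and `H_k` coincide. -/
theorem volume_Qset_eq_volume_Hset (k : ℕ) :
    volume (Qset k) = volume (Hset k) := by
  rw [Qset_eq_armPolytope, Hset_eq_shiftedSlab, ← ENNReal.toReal_eq_toReal_iff'
    (volume_armPolytope_ne_top k 1) (volume_shiftedSlab_ne_top k 0)]
  change volume.real _ = volume.real _
  cases k with
  | zero => simp [measureReal_armPolytope_zero, measureReal_shiftedSlab_zero]
  | succ k =>
    rw [measureReal_armPolytope_succ_eq_integral k zero_le_one, measureReal_shiftedSlab_succ]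
    norm_num
end

section
/- As k → ∞, (2/π)·∫_0^∞ sinc^{k+1}(t) dt = √(6/(πk)) + O(k^{-3/2}); that is, there exist constants C > 0 and K such that for all k ≥ K, |(2/π)·∫_0^∞ sinc^{k+1}(t) dt − √(6/(πk))| ≤ C·k^{-3/2}. -/
open MeasureTheory Real

noncomputable def sinc (t : ℝ) : ℝ := if t = 0 then 1 else Real.sin t / t

/-!
Laplace's method. On `[0, 1]` we have `exp (-t²/6) * (1 - t⁴/50) ≤ sinc t ≤ exp (-t²/6)`, so by
Bernoulli's inequality `∫₀¹ sincⁿ` differs from the Gaussian integral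
`∫₀^∞ exp (-n t²/6) = √(6π/n)/2` by at most `n ∫₀^∞ t⁴ exp (-n t²/6) = O(n^{-3/2})`; the lower
bound extends to `t > 1` for free because `1 - n t⁴ ≤ 0` there. On `[1, ∞)`, `|sinc|` is bounded
both by some `q < 1` and by `1/t`, so that part of the integral is `O(qⁿ)`. Finally, passing from
`n = k + 1` to `k` in `√(6/(πn))` costs another `O(k^{-3/2})`.
-/

open Set Filter Asymptotics

theorem sinc_eq_real_sinc : _root_.sinc = Real.sinc := rfl

theorem isLittleO_pow_rpow_of_lt_one {r : ℝ} (h0 : 0 < r) (h1 : r < 1) (s : ℝ) :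
    (fun n : ℕ => r ^ n) =o[atTop] fun n => (n : ℝ) ^ s := by
  refine ((isLittleO_exp_neg_mul_rpow_atTop (neg_pos.2 (log_neg h0 h1)) s).comp_tendsto
    tendsto_natCast_atTop_atTop).congr_left fun n => ?_
  simp [← rpow_natCast, rpow_def_of_pos h0, mul_comm]

theorem abs_sqrt_div_add_one_sub_sqrt_div_le (c : ℝ) {x : ℝ} (hx : 0 < x) :
    |√(c / (x + 1)) - √(c / x)| ≤ √c * x ^ (-((3 : ℝ) / 2)) := by
  have h32 : x ^ (-((3 : ℝ) / 2)) = (√x ^ 3)⁻¹ := by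
    rw [rpow_neg hx.le, sqrt_eq_rpow, ← rpow_natCast, ← rpow_mul hx.le]
    norm_num
  have hs : 0 < √x := sqrt_pos.2 hx
  have hsu : √x ≤ √(x + 1) := sqrt_le_sqrt (by linarith)
  have hs2 := sq_sqrt hx.le
  have hu2 := sq_sqrt (by linarith : 0 ≤ x + 1)
  rw [sqrt_div' c (by linarith), sqrt_div' c hx.le, h32,
    show √c / √(x + 1) - √c / √x = -(√c * (1 / √x - 1 / √(x + 1))) by ring, abs_neg, abs_mul,
    abs_of_nonneg (sqrt_nonneg c), abs_of_nonneg (sub_nonneg.2 (one_div_le_one_div_of_le hs hsu))]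
  gcongr
  rw [div_sub_div _ _ hs.ne' (hs.trans_le hsu).ne', div_le_iff₀ (by positivity)]
  field_simp
  nlinarith [mul_pos hs hs]

namespace Real

theorem abs_sinc_lt_one {x : ℝ} (hx : x ≠ 0) : |sinc x| < 1 := by
  rw [sinc_of_ne_zero hx, abs_div, div_lt_one (abs_pos.2 hx)]
  exact abs_sin_lt_abs hx

theorem abs_sinc_le_inv_abs {x : ℝ} (hx : x ≠ 0) : |sinc x| ≤ |x|⁻¹ := by
  rw [sinc_of_ne_zero hx, abs_div, div_eq_mul_inv]
  exact mul_le_of_le_one_left (inv_nonneg.2 (abs_nonneg x)) (abs_sin_le_one x)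

theorem exists_abs_sinc_le_of_le {δ : ℝ} (hδ : 0 < δ) :
    ∃ q, 0 < q ∧ q < 1 ∧ ∀ t, δ ≤ t → |sinc t| ≤ q := by
  obtain ⟨t₀, ht₀, hmax⟩ := (isCompact_Icc (a := δ) (b := δ + 2)).exists_isMaxOn
    (nonempty_Icc.2 (by linarith)) (continuous_abs.comp continuous_sinc).continuousOn
  refine ⟨max |sinc t₀| (1 / 2), by positivity,
    max_lt (abs_sinc_lt_one (by linarith [ht₀.1])) (by norm_num), fun t ht => ?_⟩
  rcases le_total t (δ + 2) with h | h
  · exact le_max_of_le_left (hmax ⟨ht, h⟩)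
  · refine le_max_of_le_right ((abs_sinc_le_inv_abs (by linarith)).trans ?_)
    rw [abs_of_pos (by linarith), inv_le_comm₀ (by linarith) (by norm_num)]
    linarith

theorem sinc_le_exp_neg_sq_div_six {t : ℝ} (h0 : 0 ≤ t) (h1 : t ≤ 1) :
    sinc t ≤ exp (-(t ^ 2 / 6)) := by
  rcases h0.eq_or_lt with rfl | ht
  · simp
  have hsin : sin t ≤ t - t ^ 3 / 6 + t ^ 5 / 100 := by
    have := (abs_le.1 (sin_bound (x := t) (by rwa [abs_of_pos ht]))).2
    rw [abs_of_pos ht] at this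
    linarith
  have hexp : 1 - t ^ 2 / 6 + t ^ 4 / 72 - t ^ 6 / 972 ≤ exp (-(t ^ 2 / 6)) := by
    have hy : |-(t ^ 2 / 6)| ≤ 1 := by
      rw [abs_neg, abs_of_nonneg (by positivity)]
      nlinarith
    have := (abs_le.1 (exp_bound hy (n := 3) (by norm_num))).1
    rw [abs_neg, abs_of_nonneg (by positivity)] at this
    simp only [Finset.sum_range_succ, Finset.sum_range_zero, Nat.factorial] at this
    norm_num at this
    linarith
  rw [sinc_of_ne_zero ht.ne', div_le_iff₀ ht]
  nlinarith [mul_le_mul_of_nonneg_right hexp ht.le,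
    mul_nonneg (pow_nonneg h0 5) (show 0 ≤ 1 / 72 - 1 / 100 - t ^ 2 / 972 by nlinarith)]

theorem exp_neg_sq_div_six_mul_le_sinc {t : ℝ} (h0 : 0 ≤ t) (h1 : t ≤ 1) :
    exp (-(t ^ 2 / 6)) * (1 - t ^ 4 / 50) ≤ sinc t := by
  rcases h0.eq_or_lt with rfl | ht
  · simp
  have hexp := quadratic_le_exp_of_nonneg (x := t ^ 2 / 6) (by positivity)
  have key : exp (-(t ^ 2 / 6)) * (1 - t ^ 4 / 50) ≤ 1 - t ^ 2 / 6 := by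
    rw [exp_neg, inv_mul_le_iff₀ (exp_pos _)]
    have h2 : t ^ 2 ≤ 1 := by nlinarith
    nlinarith [mul_le_mul_of_nonneg_left hexp (show 0 ≤ 1 - t ^ 2 / 6 by nlinarith),
      mul_nonneg (pow_nonneg h0 4) (sub_nonneg.2 h2)]
  rw [sinc_of_ne_zero ht.ne', le_div_iff₀ ht]
  nlinarith [sin_ge_sub_cube h0]

theorem exp_neg_sq_div_six_pow (t : ℝ) (n : ℕ) :
    exp (-(t ^ 2 / 6)) ^ n = exp (-(n / 6) * t ^ 2) := by
  rw [← exp_nat_mul]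
  ring_nf

theorem natCast_mul_integral_rpow_four_mul_exp_neg_mul_sq {n : ℕ} (hn : 0 < n) :
    n * ∫ t in Ioi 0, t ^ (4 : ℝ) * exp (-(n / 6) * t ^ 2) =
      6 ^ ((5 : ℝ) / 2) * Gamma (5 / 2) / 2 * (n : ℝ) ^ (-((3 : ℝ) / 2)) := by
  have hn' : (0 : ℝ) < n := Nat.cast_pos.2 hn
  have h := integral_rpow_mul_exp_neg_mul_rpow two_pos (by norm_num : (-1 : ℝ) < 4)
    (by positivity : (0 : ℝ) < n / 6)
  simp only [rpow_two] at h
  have h52 : (n : ℝ) ^ ((5 : ℝ) / 2) = n * n ^ ((3 : ℝ) / 2) := by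
    rw [show (5 : ℝ) / 2 = 1 + 3 / 2 by norm_num, rpow_add hn', rpow_one]
  rw [h, show (-(4 + 1) / 2 : ℝ) = -((5 : ℝ) / 2) by norm_num,
    show ((4 : ℝ) + 1) / 2 = 5 / 2 by norm_num, rpow_neg (by positivity : (0 : ℝ) ≤ n / 6),
    div_rpow hn'.le (by norm_num), h52, rpow_neg hn'.le]
  field_simp

section LaplaceMethod

variable {n : ℕ}

theorem abs_sinc_pow_le {δ q t : ℝ} (hδ : 0 < δ) (hq : ∀ t, δ ≤ t → |sinc t| ≤ q) (hn : 2 ≤ n)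
    (ht : δ ≤ t) : |sinc t ^ n| ≤ q ^ (n - 2) * t ^ (-2 : ℝ) := by
  have ht0 : 0 < t := hδ.trans_le ht
  have hinv := abs_sinc_le_inv_abs ht0.ne'
  rw [abs_of_pos ht0] at hinv
  obtain ⟨m, rfl⟩ := Nat.exists_eq_add_of_le' hn
  have hqt := hq t ht
  rw [abs_pow, pow_add, Nat.add_sub_cancel, rpow_neg ht0.le, rpow_two, ← inv_pow]
  exact mul_le_mul (pow_le_pow_left₀ (abs_nonneg _) hqt m) (pow_le_pow_left₀ (abs_nonneg _) hinv 2)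
    (by positivity) (pow_nonneg ((abs_nonneg _).trans hqt) m)

theorem integrableOn_Ioi_sinc_pow {δ q : ℝ} (hδ : 0 < δ) (hq : ∀ t, δ ≤ t → |sinc t| ≤ q)
    (hn : 2 ≤ n) : IntegrableOn (fun t => sinc t ^ n) (Ioi δ) :=
  ((integrableOn_Ioi_rpow_of_lt (by norm_num) hδ).const_mul (q ^ (n - 2))).mono'
    (continuous_sinc.pow n).aestronglyMeasurable
    ((ae_restrict_mem measurableSet_Ioi).mono fun _ ht => abs_sinc_pow_le hδ hq hn (le_of_lt ht))

theorem abs_integral_Ioi_sinc_pow_le {δ q : ℝ} (hδ : 0 < δ) (hq : ∀ t, δ ≤ t → |sinc t| ≤ q)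
    (hn : 2 ≤ n) : |∫ t in Ioi δ, sinc t ^ n| ≤ q ^ (n - 2) / δ := by
  rw [← norm_eq_abs]
  calc ‖∫ t in Ioi δ, sinc t ^ n‖ ≤ ∫ t in Ioi δ, q ^ (n - 2) * t ^ (-2 : ℝ) :=
        norm_integral_le_of_norm_le
          ((integrableOn_Ioi_rpow_of_lt (a := -2) (by norm_num) hδ).const_mul _)
          ((ae_restrict_mem measurableSet_Ioi).mono fun _ ht =>
            abs_sinc_pow_le hδ hq hn (le_of_lt ht))
    _ = q ^ (n - 2) / δ := by
        rw [integral_const_mul, integral_Ioi_rpow_of_lt (by norm_num) hδ]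
        norm_num [rpow_neg_one, div_eq_mul_inv]

theorem integral_Ioc_sinc_pow_le (hn : 0 < n) :
    ∫ t in Ioc 0 1, sinc t ^ n ≤ √(π / (n / 6)) / 2 := by
  have hG := integrable_exp_neg_mul_sq (b := n / 6) (by positivity)
  rw [← integral_gaussian_Ioi]
  calc ∫ t in Ioc 0 1, sinc t ^ n ≤ ∫ t in Ioc 0 1, exp (-(n / 6) * t ^ 2) := by
        refine setIntegral_mono_on (continuous_sinc.pow n).integrableOn_Ioc hG.integrableOn
          measurableSet_Ioc fun t ht => ?_
        have hlow := exp_neg_sq_div_six_mul_le_sinc ht.1.le ht.2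
        rw [← exp_neg_sq_div_six_pow]
        refine pow_le_pow_left₀ ((mul_nonneg (exp_pos _).le ?_).trans hlow)
          (sinc_le_exp_neg_sq_div_six ht.1.le ht.2) n
        nlinarith [pow_le_one₀ ht.1.le ht.2 (n := 4)]
    _ ≤ ∫ t in Ioi 0, exp (-(n / 6) * t ^ 2) :=
        setIntegral_mono_set hG.integrableOn (Eventually.of_forall fun _ => (exp_pos _).le)
          Ioc_subset_Ioi_self.eventuallyLE

theorem sub_le_integral_Ioc_sinc_pow (hn : 0 < n) :
    √(π / (n / 6)) / 2 - n * ∫ t in Ioi 0, t ^ (4 : ℝ) * exp (-(n / 6) * t ^ 2) ≤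
      ∫ t in Ioc 0 1, sinc t ^ n := by
  have hb : 0 < (n : ℝ) / 6 := by positivity
  have hG := (integrable_exp_neg_mul_sq hb).integrableOn (s := Ioi 0)
  have hM := (integrableOn_rpow_mul_exp_neg_mul_sq hb (s := 4) (by norm_num)).const_mul (n : ℝ)
  have hn1 : (1 : ℝ) ≤ n := by exact_mod_cast hn
  calc _ = ∫ t in Ioi 0,
        (exp (-(n / 6) * t ^ 2) - n * (t ^ (4 : ℝ) * exp (-(n / 6) * t ^ 2))) := by
        rw [← integral_gaussian_Ioi, ← integral_const_mul, ← integral_sub hG hM]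
    _ ≤ ∫ t in Ioi 0, (Ioc 0 1).indicator (fun t => sinc t ^ n) t := by
        refine setIntegral_mono_on (hG.sub hM) ((integrable_indicator_iff measurableSet_Ioc).2
          (continuous_sinc.pow n).integrableOn_Ioc).integrableOn measurableSet_Ioi
          fun t ht => ?_
        rw [rpow_ofNat, show exp (-(n / 6) * t ^ 2) - n * (t ^ 4 * exp (-(n / 6) * t ^ 2)) =
          exp (-(n / 6) * t ^ 2) * (1 - n * t ^ 4) by ring]
        by_cases h1 : t ≤ 1
        · rw [indicator_of_mem (show t ∈ Ioc 0 1 from ⟨ht, h1⟩)]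
          have ht4 : t ^ 4 ≤ 1 := pow_le_one₀ (le_of_lt ht) h1
          have hbernoulli : 1 - n * t ^ 4 ≤ (1 - t ^ 4 / 50) ^ n := by
            have := one_add_mul_le_pow (a := -(t ^ 4 / 50)) (by nlinarith) n
            rw [← sub_eq_add_neg] at this
            nlinarith [mul_nonneg (Nat.cast_nonneg (α := ℝ) n) (pow_nonneg (le_of_lt ht) 4)]
          calc exp (-(n / 6) * t ^ 2) * (1 - n * t ^ 4)
              ≤ exp (-(t ^ 2 / 6)) ^ n * (1 - t ^ 4 / 50) ^ n := by
                rw [exp_neg_sq_div_six_pow]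
                gcongr
            _ = (exp (-(t ^ 2 / 6)) * (1 - t ^ 4 / 50)) ^ n := (mul_pow _ _ _).symm
            _ ≤ sinc t ^ n := pow_le_pow_left₀ (mul_nonneg (exp_pos _).le (by linarith))
                (exp_neg_sq_div_six_mul_le_sinc (le_of_lt ht) h1) n
        · rw [indicator_of_notMem fun h => h1 h.2]
          have ht4 : 1 ≤ t ^ 4 := one_le_pow₀ (le_of_not_ge h1)
          exact mul_nonpos_of_nonneg_of_nonpos (exp_pos _).le (by nlinarith)
    _ = ∫ t in Ioc 0 1, sinc t ^ n := by
        rw [setIntegral_indicator measurableSet_Ioc, inter_eq_right.2 Ioc_subset_Ioi_self]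

theorem abs_integral_sinc_pow_sub_le {q : ℝ} (hq : ∀ t, 1 ≤ t → |sinc t| ≤ q) (hn : 2 ≤ n) :
    |(∫ t in Ioi 0, sinc t ^ n) - √(π / (n / 6)) / 2| ≤
      n * (∫ t in Ioi 0, t ^ (4 : ℝ) * exp (-(n / 6) * t ^ 2)) + q ^ (n - 2) := by
  have hsplit : ∫ t in Ioi 0, sinc t ^ n =
      (∫ t in Ioc 0 1, sinc t ^ n) + ∫ t in Ioi 1, sinc t ^ n := by
    rw [← setIntegral_union Ioc_disjoint_Ioi_same measurableSet_Ioi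
      (by fun_prop : Continuous fun t => sinc t ^ n).integrableOn_Ioc
      (integrableOn_Ioi_sinc_pow one_pos hq hn), Ioc_union_Ioi_eq_Ioi zero_le_one]
  have htail := abs_le.1 (abs_integral_Ioi_sinc_pow_le one_pos hq hn)
  have hup := integral_Ioc_sinc_pow_le (n := n) (by omega)
  have hlow := sub_le_integral_Ioc_sinc_pow (n := n) (by omega)
  have hmoment : 0 ≤ n * ∫ t in Ioi 0, t ^ (4 : ℝ) * exp (-(n / 6) * t ^ 2) :=
    mul_nonneg n.cast_nonneg (setIntegral_nonneg measurableSet_Ioi fun t ht =>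
      mul_nonneg (rpow_nonneg (le_of_lt ht) _) (exp_pos _).le)
  rw [div_one] at htail
  rw [hsplit, abs_le]
  constructor <;> linarith

end LaplaceMethod

theorem isBigO_integral_sinc_pow_sub :
    (fun n : ℕ => (∫ t in Ioi 0, sinc t ^ n) - √(π / (n / 6)) / 2) =O[atTop]
      fun n => (n : ℝ) ^ (-((3 : ℝ) / 2)) := by
  obtain ⟨q, hq0, hq1, hq⟩ := exists_abs_sinc_le_of_le one_pos
  have hmoment : (fun n : ℕ => n * ∫ t in Ioi 0, t ^ (4 : ℝ) * exp (-(n / 6) * t ^ 2))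
      =O[atTop] fun n => (n : ℝ) ^ (-((3 : ℝ) / 2)) :=
    ((isBigO_refl _ _).const_mul_left (6 ^ ((5 : ℝ) / 2) * Gamma (5 / 2) / 2)).congr'
      ((eventually_gt_atTop 0).mono fun _ hn =>
        (natCast_mul_integral_rpow_four_mul_exp_neg_mul_sq hn).symm) EventuallyEq.rfl
  have hgeom : (fun n : ℕ => q ^ (n - 2)) =O[atTop] fun n => (n : ℝ) ^ (-((3 : ℝ) / 2)) :=
    ((isLittleO_pow_rpow_of_lt_one hq0 hq1 _).isBigO.const_mul_left (q ^ 2)⁻¹).congr'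
      ((eventually_ge_atTop 2).mono fun n hn => by simp only [pow_sub₀ q hq0.ne' hn, mul_comm])
      EventuallyEq.rfl
  refine (IsBigO.of_bound' ?_).trans (hmoment.add hgeom)
  filter_upwards [eventually_ge_atTop 2] with n hn
  exact (abs_integral_sinc_pow_sub_le hq hn).trans (le_abs_self _)

theorem isBigO_two_div_pi_mul_integral_sinc_pow_succ_sub :
    (fun k : ℕ => 2 / π * (∫ t in Ioi 0, sinc t ^ (k + 1)) - √(6 / (π * k))) =O[atTop]
      fun k => (k : ℝ) ^ (-((3 : ℝ) / 2)) := by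
  have hsucc : (fun k : ℕ => ((k + 1 : ℕ) : ℝ) ^ (-((3 : ℝ) / 2))) =O[atTop]
      fun k => (k : ℝ) ^ (-((3 : ℝ) / 2)) := by
    refine IsBigO.of_bound' ?_
    filter_upwards [eventually_gt_atTop 0] with k hk
    rw [norm_eq_abs, norm_eq_abs, abs_of_nonneg (by positivity), abs_of_nonneg (by positivity)]
    exact rpow_le_rpow_of_nonpos (Nat.cast_pos.2 hk) (by push_cast; linarith) (by norm_num)
  have hshift := (isBigO_integral_sinc_pow_sub.comp_tendsto (tendsto_add_atTop_nat 1)).trans hsucc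
  have hsqrt : (fun k : ℕ => √(6 / (π * (k + 1))) - √(6 / (π * k))) =O[atTop]
      fun k => (k : ℝ) ^ (-((3 : ℝ) / 2)) := by
    refine IsBigO.of_bound √(6 / π) ?_
    filter_upwards [eventually_gt_atTop 0] with k hk
    rw [norm_eq_abs, norm_of_nonneg (by positivity)]
    simpa only [div_div] using abs_sqrt_div_add_one_sub_sqrt_div_le (6 / π) (Nat.cast_pos.2 hk)
  have hgauss (x : ℝ) : √(π / (x / 6)) = π * √(6 / (π * x)) := by
    rw [show π / (x / 6) = π ^ 2 * (6 / (π * x)) by field_simp, sqrt_mul (sq_nonneg π),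
      sqrt_sq pi_pos.le]
  refine ((hshift.const_mul_left (2 / π)).add hsqrt).congr_left fun k => ?_
  simp only [Function.comp_apply, Nat.cast_add, Nat.cast_one, hgauss]
  field_simp
  ring

end Real

/-- Laplace's estimate: `(2/π) ∫_0^∞ sinc^{k+1}(t) dt = √(6/(πk)) + O(k^{-3/2})`. -/
theorem sinc_integral_estimate :
    ∃ C > (0 : ℝ), ∃ K : ℕ, ∀ k : ℕ, K ≤ k →
      |(2 / π) * (∫ t in Set.Ioi (0 : ℝ), _root_.sinc t ^ (k + 1)) -
          Real.sqrt (6 / (π * k))| ≤ C / (k : ℝ) ^ ((3 : ℝ) / 2) := by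
  obtain ⟨C, hC, hbound⟩ := isBigO_two_div_pi_mul_integral_sinc_pow_succ_sub.exists_pos
  obtain ⟨K, hK⟩ := eventually_atTop.1 hbound.bound
  refine ⟨C, hC, K, fun k hk => ?_⟩
  have := hK k hk
  rwa [norm_eq_abs, norm_of_nonneg (rpow_nonneg k.cast_nonneg _), rpow_neg k.cast_nonneg,
    ← div_eq_mul_inv, ← sinc_eq_real_sinc] at this
end
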